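/- Let u : ℝ^n → [−1,1] be a Lipschitz continuous Q-minimizer of the energy E and let θ ∈ (−1, −1/2]. Define S(τ) := min{(τ+1)^p, 1}. Then there exists a constant C > 0, depending only on n, Q, p, θ, the constant C₀ in the potential bounds, and the Lipschitz constant of u, such that ∫_{B_r^+(x₀) ∩ {u ≤ θ}} S(u(x)) dx ≤ C r^{n−1} for every x₀ in the closure of ℝ^n_+ and every r ≥ 1. -/

import Mathlib

/-!
Compare `u` on `ball x₀ (r + 1)` with the competitor `max u η`, where the cutoff `η` is `1` on
`ball x₀ (r - 1)` and `-1` off `ball x₀ (r + 1)`. Since `F 1 = 0`, the competitor only pays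
energy on the annulus, of volume `O(r^(n-1))`, and on the flat boundary piece, of
`H^(n-1)`-measure `O(r^(n-1))`; by `Q`-minimality `E_{B_{r+1}}(u) = O(r^(n-1))`. Finally, on
`{u ≤ θ}` with `θ ≤ 0` we have `min ((u+1)^p) 1 ≤ (1 - u²)^p ≤ C₀ F(u)`, and `∫ F(u)` is part
of the energy.
-/

open MeasureTheory Set Metric

/-- The open half-space `{x : xₙ > 0}` of `ℝⁿ` (last coordinate positive). -/
def upperHalfSpace (n : ℕ) (hn : 0 < n) : Set (EuclideanSpace ℝ (Fin n)) :=
  {x | 0 < x ⟨n - 1, Nat.sub_lt hn one_pos⟩}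

/-- The hyperplane `{x : xₙ = 0}` of `ℝⁿ` (last coordinate zero). -/
def bottomHyperplane (n : ℕ) (hn : 0 < n) : Set (EuclideanSpace ℝ (Fin n)) :=
  {x | x ⟨n - 1, Nat.sub_lt hn one_pos⟩ = 0}

/-- The energy `E_Ω(u) = ∫_{Ω ∩ ℝⁿ₊} (|∇u|^p + F(u)) dx + ∫_{Ω ∩ {xₙ=0}} G(u) dH^{n-1}`. -/
noncomputable def energyE (n : ℕ) (hn : 0 < n) (p : ℝ) (F G : ℝ → ℝ)
    (Ω : Set (EuclideanSpace ℝ (Fin n))) (u : EuclideanSpace ℝ (Fin n) → ℝ) : ℝ :=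
  (∫ x in Ω ∩ upperHalfSpace n hn, (‖fderiv ℝ u x‖ ^ p + F (u x))) +
  (∫ x in Ω ∩ bottomHyperplane n hn, G (u x) ∂(μH[(n - 1 : ℕ)]))

/-- `u` is a `Q`-minimizer of the energy: for every bounded open `Ω` and every Lipschitz
perturbation `φ` supported in `Ω` with `u + φ` taking values in `[-1,1]`,
`E_Ω(u) ≤ Q · E_Ω(u + φ)`. -/
def IsQMinimizer (n : ℕ) (hn : 0 < n) (p Q : ℝ) (F G : ℝ → ℝ)
    (u : EuclideanSpace ℝ (Fin n) → ℝ) : Prop :=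
  ∀ Ω : Set (EuclideanSpace ℝ (Fin n)), IsOpen Ω → Bornology.IsBounded Ω →
    ∀ φ : EuclideanSpace ℝ (Fin n) → ℝ, (∃ K, LipschitzWith K φ) →
      Function.support φ ⊆ Ω → (∀ x, u x + φ x ∈ Icc (-1 : ℝ) 1) →
      energyE n hn p F G Ω u ≤ Q * energyE n hn p F G Ω (fun x => u x + φ x)

/-- The double-well potential bounds: `max(F τ, G τ) ≤ C₀ (1-τ²)^p` and
`F τ ≥ (1-τ²)^p / C₀` for `τ ∈ [-1,1]`. -/
def PotentialBounds (p C₀ : ℝ) (F G : ℝ → ℝ) : Prop :=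
  ∀ τ ∈ Icc (-1 : ℝ) 1,
    max (F τ) (G τ) ≤ C₀ * (1 - τ ^ 2) ^ p ∧ (1 - τ ^ 2) ^ p / C₀ ≤ F τ

open scoped NNReal ENNReal

namespace PotentialBounds

variable {p C₀ : ℝ} {F G : ℝ → ℝ} {τ : ℝ}

theorem max_le (h : PotentialBounds p C₀ F G) (hp : 0 ≤ p) (hC₀ : 0 ≤ C₀)
    (hτ : τ ∈ Icc (-1 : ℝ) 1) : max (F τ) (G τ) ≤ C₀ := by
  have hw : (1 - τ ^ 2) ^ p ≤ 1 :=
    Real.rpow_le_one (by nlinarith [hτ.1, hτ.2]) (by nlinarith) hp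
  exact (h τ hτ).1.trans (mul_le_of_le_one_right hC₀ hw)

theorem apply_one (h : PotentialBounds p C₀ F G) (hp : 0 < p) (hF : 0 ≤ F 1) : F 1 = 0 := by
  have h1 := (h 1 (by norm_num)).1
  rw [show (1 : ℝ) - 1 ^ 2 = 0 by norm_num, Real.zero_rpow hp.ne', mul_zero] at h1
  exact le_antisymm ((le_max_left _ _).trans h1) hF

theorem rpow_add_one_le (h : PotentialBounds p C₀ F G) (hp : 0 ≤ p) (hC₀ : 0 < C₀)
    (hτ : τ ∈ Icc (-1 : ℝ) 0) : (τ + 1) ^ p ≤ C₀ * F τ := by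
  have hτ' : τ ∈ Icc (-1 : ℝ) 1 := ⟨hτ.1, hτ.2.trans zero_le_one⟩
  calc (τ + 1) ^ p ≤ (1 - τ ^ 2) ^ p :=
        Real.rpow_le_rpow (by linarith [hτ.1]) (by nlinarith [hτ.1, hτ.2]) hp
    _ ≤ C₀ * F τ := (div_le_iff₀' hC₀).1 (h τ hτ').2

end PotentialBounds

section Cutoff

variable {α : Type*} [PseudoMetricSpace α]

def ballCutoff (x₀ : α) (r : ℝ) (x : α) : ℝ :=
  max (-1) (min 1 (r - dist x x₀))

theorem lipschitzWith_ballCutoff (x₀ : α) (r : ℝ) : LipschitzWith 1 (ballCutoff x₀ r) := by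
  have h : LipschitzWith 1 fun x : α => r - dist x x₀ := by
    simpa using (LipschitzWith.const r).sub (LipschitzWith.dist_left x₀)
  exact (h.const_min 1).const_max (-1)

theorem ballCutoff_mem_Icc (x₀ : α) (r : ℝ) (x : α) : ballCutoff x₀ r x ∈ Icc (-1 : ℝ) 1 :=
  ⟨le_max_left _ _, max_le (by norm_num) (min_le_left _ _)⟩

theorem ballCutoff_eq_one {x₀ x : α} {r : ℝ} (hx : x ∈ ball x₀ (r - 1)) :
    ballCutoff x₀ r x = 1 := by
  rw [mem_ball] at hx
  rw [ballCutoff, min_eq_left (by linarith), max_eq_right (by norm_num)]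

theorem ballCutoff_eq_neg_one {x₀ x : α} {r : ℝ} (hx : x ∉ ball x₀ (r + 1)) :
    ballCutoff x₀ r x = -1 := by
  rw [mem_ball, not_lt] at hx
  exact max_eq_left ((min_le_right _ _).trans (by linarith))

end Cutoff

theorem integrableOn_of_nonneg_of_le {α : Type*} [MeasurableSpace α] {μ : Measure α} {s : Set α}
    {f : α → ℝ} {M : ℝ} (hs : μ s ≠ ∞) (hf : AEStronglyMeasurable f μ) (h0 : ∀ x, 0 ≤ f x)
    (hM : ∀ x, f x ≤ M) : IntegrableOn f s μ :=
  Measure.integrableOn_of_bounded hs hf <|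
    ae_of_all _ fun x => (Real.norm_of_nonneg (h0 x)).trans_le (hM x)

section Annulus

variable {E : Type*} [NormedAddCommGroup E] [NormedSpace ℝ E] [MeasurableSpace E] [BorelSpace E]
  [FiniteDimensional ℝ E] [Nontrivial E] (μ : Measure E) [μ.IsAddHaarMeasure]

theorem measureReal_ball_sdiff_ball_le (x : E) {r : ℝ} (hr : 1 ≤ r) :
    μ.real (ball x (r + 1) \ ball x (r - 1)) ≤
      2 * Module.finrank ℝ E * 2 ^ (Module.finrank ℝ E - 1) * μ.real (ball 0 1) *
        r ^ (Module.finrank ℝ E - 1) := by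
  set d := Module.finrank ℝ E
  have hpow : (r + 1) ^ d - (r - 1) ^ d ≤ 2 * d * (2 * r) ^ (d - 1) := by
    have h := abs_pow_sub_pow_le (r + 1) (r - 1) d
    rw [show r + 1 - (r - 1) = 2 by ring, abs_two, abs_of_nonneg (by linarith : 0 ≤ r + 1),
      abs_of_nonneg (by linarith : 0 ≤ r - 1), max_eq_left (by linarith)] at h
    calc (r + 1) ^ d - (r - 1) ^ d ≤ 2 * d * (r + 1) ^ (d - 1) := (le_abs_self _).trans h
      _ ≤ 2 * d * (2 * r) ^ (d - 1) := by gcongr; linarith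
  rw [measureReal_sdiff (ball_subset_ball (by linarith)) measurableSet_ball,
    measureReal_def, measureReal_def,
    Measure.addHaar_ball μ x (by linarith : (0 : ℝ) ≤ r + 1),
    Measure.addHaar_ball μ x (by linarith : (0 : ℝ) ≤ r - 1),
    ENNReal.toReal_mul, ENNReal.toReal_mul, ENNReal.toReal_ofReal (by positivity),
    ENNReal.toReal_ofReal (pow_nonneg (by linarith) _), ← sub_mul, ← measureReal_def]
  calc ((r + 1) ^ d - (r - 1) ^ d) * μ.real (ball 0 1)
      ≤ 2 * d * (2 * r) ^ (d - 1) * μ.real (ball 0 1) := by gcongr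
    _ = _ := by rw [mul_pow]; ring

end Annulus

section Hyperplane

/-- The source `Fin m → ℝ` carries the sup metric, for which `μH[m] = volume`. -/
def extendByZero (n m : ℕ) (y : Fin m → ℝ) : EuclideanSpace ℝ (Fin n) :=
  WithLp.toLp 2 fun j => if h : (j : ℕ) < m then y ⟨j, h⟩ else 0

theorem lipschitzWith_extendByZero (n m : ℕ) :
    LipschitzWith (NNReal.sqrt n) (extendByZero n m) := by
  refine LipschitzWith.of_dist_le_mul fun y z => ?_
  have hcoord : ∀ j, dist (extendByZero n m y j) (extendByZero n m z j) ^ 2 ≤ dist y z ^ 2 := by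
    intro j
    simp only [extendByZero, WithLp.ofLp_toLp]
    split_ifs with h
    · exact pow_le_pow_left₀ dist_nonneg (dist_le_pi_dist y z _) 2
    · simp
  calc dist (extendByZero n m y) (extendByZero n m z)
      ≤ √(∑ _j : Fin n, dist y z ^ 2) := by
        rw [EuclideanSpace.dist_eq]
        exact Real.sqrt_le_sqrt (Finset.sum_le_sum fun j _ => hcoord j)
    _ = NNReal.sqrt n * dist y z := by
        rw [Finset.sum_const, Finset.card_univ, Fintype.card_fin, nsmul_eq_mul,
          Real.sqrt_mul (Nat.cast_nonneg n), Real.sqrt_sq dist_nonneg, Real.coe_sqrt,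
          NNReal.coe_natCast]

theorem ball_inter_bottomHyperplane_subset_image {n : ℕ} (hn : 0 < n)
    (x₀ : EuclideanSpace ℝ (Fin n)) {R : ℝ} (hR : 0 ≤ R) :
    ball x₀ R ∩ bottomHyperplane n hn ⊆
      extendByZero n (n - 1) '' closedBall (fun i => x₀ (Fin.castLE (Nat.sub_le n 1) i)) R := by
  rintro x ⟨hxball, hxT⟩
  refine ⟨fun i => x (Fin.castLE (Nat.sub_le n 1) i), ?_, ?_⟩
  · rw [mem_closedBall, dist_pi_le_iff hR]
    exact fun i => (PiLp.dist_apply_le x x₀ _).trans (mem_ball.1 hxball).le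
  · ext j
    simp only [extendByZero, WithLp.ofLp_toLp]
    split_ifs with h
    · rfl
    · have hj : j = ⟨n - 1, Nat.sub_lt hn one_pos⟩ := Fin.ext (by have := j.isLt; simp only; omega)
      rw [hj]
      exact hxT.symm

theorem hausdorffMeasure_ball_inter_bottomHyperplane_le {n : ℕ} (hn : 0 < n)
    (x₀ : EuclideanSpace ℝ (Fin n)) {R : ℝ} (hR : 0 ≤ R) :
    μH[(n - 1 : ℕ)] (ball x₀ R ∩ bottomHyperplane n hn) ≤
      ENNReal.ofReal ((2 * √n * R) ^ (n - 1)) := by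
  set c : Fin (n - 1) → ℝ := fun i => x₀ (Fin.castLE (Nat.sub_le n 1) i)
  have hvol : (μH[(n - 1 : ℕ)] : Measure (Fin (n - 1) → ℝ)) = volume := by
    simpa only [Fintype.card_fin] using hausdorffMeasure_pi_real (ι := Fin (n - 1))
  calc μH[(n - 1 : ℕ)] (ball x₀ R ∩ bottomHyperplane n hn)
      ≤ μH[(n - 1 : ℕ)] (extendByZero n (n - 1) '' closedBall c R) :=
        measure_mono (ball_inter_bottomHyperplane_subset_image hn x₀ hR)
    _ ≤ (NNReal.sqrt n : ℝ≥0∞) ^ ((n - 1 : ℕ) : ℝ) * μH[(n - 1 : ℕ)] (closedBall c R) :=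
        (lipschitzWith_extendByZero n (n - 1)).hausdorffMeasure_image_le (by positivity) _
    _ = ENNReal.ofReal (√n ^ (n - 1)) * ENNReal.ofReal ((2 * R) ^ (n - 1)) := by
        rw [ENNReal.rpow_natCast, hvol, Real.volume_pi_closedBall c hR, Fintype.card_fin,
          ENNReal.ofReal_pow (Real.sqrt_nonneg _), ← NNReal.coe_natCast, ← Real.coe_sqrt,
          ENNReal.ofReal_coe_nnreal]
    _ = ENNReal.ofReal ((2 * √n * R) ^ (n - 1)) := by
        rw [← ENNReal.ofReal_mul (by positivity), ← mul_pow]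
        ring_nf

end Hyperplane

theorem setIntegral_sublevel_le_mul_setIntegral {α : Type*} [MeasurableSpace α] {μ : Measure α}
    {p C₀ θ : ℝ} {F G : ℝ → ℝ} (hPB : PotentialBounds p C₀ F G) (hp : 0 ≤ p) (hC₀ : 0 < C₀)
    (hθ : θ ≤ 0) (hFc : Continuous F) (hF0 : ∀ τ, 0 ≤ F τ) {u : α → ℝ} (hu : Measurable u)
    (hu1 : ∀ x, u x ∈ Icc (-1 : ℝ) 1) {s t : Set α} (hs : MeasurableSet s) (hst : s ⊆ t)
    (ht : μ t ≠ ∞) :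
    ∫ x in s ∩ {x | u x ≤ θ}, min ((u x + 1) ^ p) 1 ∂μ ≤ C₀ * ∫ x in t, F (u x) ∂μ := by
  have hsθ : MeasurableSet (s ∩ {x | u x ≤ θ}) := hs.inter (measurableSet_le hu measurable_const)
  have hsθt : s ∩ {x | u x ≤ θ} ⊆ t := inter_subset_left.trans hst
  have hsθ_fin : μ (s ∩ {x | u x ≤ θ}) ≠ ∞ := measure_ne_top_of_subset hsθt ht
  have hFu_nonneg : ∀ x, 0 ≤ C₀ * F (u x) := fun x => mul_nonneg hC₀.le (hF0 _)
  have hFu_int : IntegrableOn (fun x => C₀ * F (u x)) t μ :=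
    integrableOn_of_nonneg_of_le ht ((hFc.measurable.comp hu).const_mul C₀).aestronglyMeasurable
      hFu_nonneg fun x =>
        mul_le_mul_of_nonneg_left ((le_max_left _ _).trans (hPB.max_le hp hC₀.le (hu1 x))) hC₀.le
  have hS_int : IntegrableOn (fun x => min ((u x + 1) ^ p) 1) (s ∩ {x | u x ≤ θ}) μ :=
    integrableOn_of_nonneg_of_le hsθ_fin
      (((hu.add_const 1).pow_const p).min measurable_const).aestronglyMeasurable
      (fun x => le_min (Real.rpow_nonneg (by linarith [(hu1 x).1]) p) zero_le_one)
      (fun x => min_le_right _ _)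
  calc ∫ x in s ∩ {x | u x ≤ θ}, min ((u x + 1) ^ p) 1 ∂μ
      ≤ ∫ x in s ∩ {x | u x ≤ θ}, C₀ * F (u x) ∂μ :=
        setIntegral_mono_on hS_int (hFu_int.mono_set hsθt) hsθ fun x hx =>
          (min_le_left _ _).trans
            (hPB.rpow_add_one_le hp hC₀ ⟨(hu1 x).1, hx.2.trans hθ⟩)
    _ ≤ ∫ x in t, C₀ * F (u x) ∂μ :=
        setIntegral_mono_set hFu_int (ae_of_all _ hFu_nonneg) hsθt.eventuallyLE
    _ = C₀ * ∫ x in t, F (u x) ∂μ := integral_const_mul _ _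

section Energy

variable {n : ℕ} (hn : 0 < n) {p C₀ M : ℝ} {F G : ℝ → ℝ}

theorem measurableSet_upperHalfSpace : MeasurableSet (upperHalfSpace n hn) :=
  (isOpen_lt continuous_const (EuclideanSpace.proj _).continuous).measurableSet

theorem integrableOn_energyDensity {K : ℝ≥0} {u : EuclideanSpace ℝ (Fin n) → ℝ}
    (hu : LipschitzWith K u) (hu1 : ∀ x, u x ∈ Icc (-1 : ℝ) 1) (hFc : Continuous F)
    (hF0 : ∀ τ, 0 ≤ F τ) (hFM : ∀ τ ∈ Icc (-1 : ℝ) 1, F τ ≤ M) (hp : 0 ≤ p)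
    {s : Set (EuclideanSpace ℝ (Fin n))} (hs : volume s ≠ ∞) :
    IntegrableOn (fun x => ‖fderiv ℝ u x‖ ^ p + F (u x)) s :=
  integrableOn_of_nonneg_of_le hs
    (((measurable_fderiv ℝ u).norm.pow_const p).add
      (hFc.measurable.comp hu.continuous.measurable)).aestronglyMeasurable
    (fun _ => add_nonneg (Real.rpow_nonneg (norm_nonneg _) p) (hF0 _))
    (fun x => add_le_add
      (Real.rpow_le_rpow (norm_nonneg _) (norm_fderiv_le_of_lipschitz ℝ hu) hp) (hFM _ (hu1 x)))

theorem setIntegral_comp_le_energyE {K : ℝ≥0} {u : EuclideanSpace ℝ (Fin n) → ℝ}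
    (hu : LipschitzWith K u) (hu1 : ∀ x, u x ∈ Icc (-1 : ℝ) 1) (hFc : Continuous F)
    (hF0 : ∀ τ, 0 ≤ F τ) (hFM : ∀ τ ∈ Icc (-1 : ℝ) 1, F τ ≤ M) (hG0 : ∀ τ, 0 ≤ G τ)
    (hp : 0 ≤ p) {Ω : Set (EuclideanSpace ℝ (Fin n))} (hΩ : MeasurableSet Ω) (hΩ' : volume Ω ≠ ∞) :
    ∫ x in Ω ∩ upperHalfSpace n hn, F (u x) ≤ energyE n hn p F G Ω u := by
  have hfin : volume (Ω ∩ upperHalfSpace n hn) ≠ ∞ := measure_ne_top_of_subset inter_subset_left hΩ'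
  have hFu : IntegrableOn (fun x => F (u x)) (Ω ∩ upperHalfSpace n hn) :=
    integrableOn_of_nonneg_of_le hfin (hFc.comp hu.continuous).aestronglyMeasurable
      (fun _ => hF0 _) (fun x => hFM _ (hu1 x))
  have hvolume := setIntegral_mono_on hFu
    (integrableOn_energyDensity hu hu1 hFc hF0 hFM hp hfin)
    (hΩ.inter (measurableSet_upperHalfSpace hn))
    (fun x _ => le_add_of_nonneg_left (Real.rpow_nonneg (norm_nonneg (fderiv ℝ u x)) p))
  have hboundary : 0 ≤ ∫ x in Ω ∩ bottomHyperplane n hn, G (u x) ∂μH[(n - 1 : ℕ)] :=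
    integral_nonneg fun _ => hG0 _
  rw [energyE]
  linarith

theorem energyE_ball_le_of_eqOn_ball {K : ℝ≥0} {v : EuclideanSpace ℝ (Fin n) → ℝ}
    (hv : LipschitzWith K v) (hv1 : ∀ x, v x ∈ Icc (-1 : ℝ) 1) {x₀ : EuclideanSpace ℝ (Fin n)}
    {r : ℝ} (hvone : ∀ x ∈ ball x₀ (r - 1), v x = 1) (hp : 0 < p) (hF1 : F 1 = 0)
    (hG0 : ∀ τ, 0 ≤ G τ) (hF0 : ∀ τ, 0 ≤ F τ) (hFG : ∀ τ ∈ Icc (-1 : ℝ) 1, max (F τ) (G τ) ≤ C₀)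
    (hT : μH[(n - 1 : ℕ)] (ball x₀ (r + 1) ∩ bottomHyperplane n hn) ≠ ∞) :
    energyE n hn p F G (ball x₀ (r + 1)) v ≤
      ((K : ℝ) ^ p + C₀) * volume.real (ball x₀ (r + 1) \ ball x₀ (r - 1)) +
        C₀ * μH[(n - 1 : ℕ)].real (ball x₀ (r + 1) ∩ bottomHyperplane n hn) := by
  set H := ball x₀ (r + 1) ∩ upperHalfSpace n hn
  have hzero : ∀ x ∈ H \ (H \ ball x₀ (r - 1)), ‖fderiv ℝ v x‖ ^ p + F (v x) = 0 := by
    intro x hx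
    have hx' : x ∈ ball x₀ (r - 1) := of_not_not fun h => hx.2 ⟨hx.1, h⟩
    have hvx : v =ᶠ[nhds x] fun _ => 1 :=
      Filter.eventually_of_mem (isOpen_ball.mem_nhds hx') hvone
    rw [hvx.fderiv_eq, fderiv_const_apply, norm_zero, Real.zero_rpow hp.ne', hvone x hx', hF1,
      add_zero]
  have hbulk : ∫ x in H, ‖fderiv ℝ v x‖ ^ p + F (v x) ≤
      ((K : ℝ) ^ p + C₀) * volume.real (ball x₀ (r + 1) \ ball x₀ (r - 1)) := by
    have hA : H \ ball x₀ (r - 1) ⊆ ball x₀ (r + 1) \ ball x₀ (r - 1) :=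
      sdiff_subset_sdiff_left inter_subset_left
    rw [setIntegral_eq_of_subset_of_forall_sdiff_eq_zero
      (measurableSet_ball.inter (measurableSet_upperHalfSpace hn)) sdiff_subset hzero]
    refine (Real.le_norm_self _).trans <|
      (norm_setIntegral_le_of_norm_le_const (C := (K : ℝ) ^ p + C₀)
      (measure_lt_top_of_subset hA (measure_ne_top_of_subset sdiff_subset measure_ball_lt_top.ne))
      fun x _ => ?_).trans ?_
    · exact (Real.norm_of_nonneg (add_nonneg (Real.rpow_nonneg (norm_nonneg _) p) (hF0 _))).trans_le
        (add_le_add (Real.rpow_le_rpow (norm_nonneg _) (norm_fderiv_le_of_lipschitz ℝ hv) hp.le)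
          ((le_max_left _ _).trans (hFG _ (hv1 x))))
    · have hC₀ : 0 ≤ C₀ := (hF0 1).trans ((le_max_left _ _).trans (hFG 1 (by norm_num)))
      exact mul_le_mul_of_nonneg_left
        (measureReal_mono hA (measure_ne_top_of_subset sdiff_subset measure_ball_lt_top.ne))
        (by positivity)
  have hboundary : ∫ x in ball x₀ (r + 1) ∩ bottomHyperplane n hn, G (v x) ∂μH[(n - 1 : ℕ)] ≤
      C₀ * μH[(n - 1 : ℕ)].real (ball x₀ (r + 1) ∩ bottomHyperplane n hn) :=
    (Real.le_norm_self _).trans <| norm_setIntegral_le_of_norm_le_const hT.lt_top fun x _ =>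
      (Real.norm_of_nonneg (hG0 _)).trans_le ((le_max_right _ _).trans (hFG _ (hv1 x)))
  exact add_le_add hbulk hboundary

end Energy

theorem exists_energyE_ball_le_of_isQMinimizer {n : ℕ} (hn : 0 < n) {p Q C₀ : ℝ} (hp : 0 < p)
    (hQ : 0 ≤ Q) (hC₀ : 0 ≤ C₀) (L : ℝ≥0) :
    ∃ C : ℝ, ∀ F G : ℝ → ℝ, (∀ τ, 0 ≤ F τ) → (∀ τ, 0 ≤ G τ) → PotentialBounds p C₀ F G →
      ∀ u : EuclideanSpace ℝ (Fin n) → ℝ, LipschitzWith L u → (∀ x, u x ∈ Icc (-1 : ℝ) 1) →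
        IsQMinimizer n hn p Q F G u → ∀ x₀ r, 1 ≤ r →
          energyE n hn p F G (ball x₀ (r + 1)) u ≤ C * r ^ (n - 1) := by
  have : NeZero n := ⟨hn.ne'⟩
  set A : ℝ := 2 * n * 2 ^ (n - 1) * volume.real (ball (0 : EuclideanSpace ℝ (Fin n)) 1)
  set B : ℝ := (4 * √n) ^ (n - 1)
  refine ⟨Q * ((((max L 1 : ℝ≥0) : ℝ) ^ p + C₀) * A + C₀ * B), ?_⟩
  intro F G hF0 hG0 hPB u hu hu1 hmin x₀ r hr
  set v : EuclideanSpace ℝ (Fin n) → ℝ := fun x => max (u x) (ballCutoff x₀ r x)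
  have hv : LipschitzWith (max L 1) v := hu.max (lipschitzWith_ballCutoff x₀ r)
  have hv1 : ∀ x, v x ∈ Icc (-1 : ℝ) 1 := fun x =>
    ⟨(hu1 x).1.trans (le_max_left _ _), max_le (hu1 x).2 (ballCutoff_mem_Icc x₀ r x).2⟩
  have hvone : ∀ x ∈ ball x₀ (r - 1), v x = 1 := fun x hx => by
    simp only [v, ballCutoff_eq_one hx, max_eq_right (hu1 x).2]
  have hsupp : Function.support (fun x => v x - u x) ⊆ ball x₀ (r + 1) := fun x hx => by
    by_contra hx'
    apply hx
    simp only [v, ballCutoff_eq_neg_one hx', max_eq_left (hu1 x).1, sub_self]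
  have hmin_v : energyE n hn p F G (ball x₀ (r + 1)) u ≤
      Q * energyE n hn p F G (ball x₀ (r + 1)) v := by
    simpa only [add_sub_cancel] using
      hmin _ isOpen_ball isBounded_ball _ ⟨_, hv.sub hu⟩ hsupp (by simpa only [add_sub_cancel])
  have hT := hausdorffMeasure_ball_inter_bottomHyperplane_le hn x₀ (by linarith : 0 ≤ r + 1)
  have hTreal : μH[(n - 1 : ℕ)].real (ball x₀ (r + 1) ∩ bottomHyperplane n hn) ≤ B * r ^ (n - 1) :=
    calc _ ≤ (2 * √n * (r + 1)) ^ (n - 1) := ENNReal.toReal_le_of_le_ofReal (by positivity) hT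
      _ ≤ (4 * √n * r) ^ (n - 1) :=
        pow_le_pow_left₀ (by positivity) (by nlinarith [Real.sqrt_nonneg n]) _
      _ = B * r ^ (n - 1) := mul_pow _ _ _
  have hannulus := measureReal_ball_sdiff_ball_le volume x₀ hr
  rw [finrank_euclideanSpace_fin] at hannulus
  have hE_v := energyE_ball_le_of_eqOn_ball hn hv hv1 hvone hp (hPB.apply_one hp (hF0 1)) hG0 hF0
    (fun τ hτ => hPB.max_le hp.le hC₀ hτ) (hT.trans_lt ENNReal.ofReal_lt_top).ne
  calc energyE n hn p F G (ball x₀ (r + 1)) u ≤ Q * energyE n hn p F G (ball x₀ (r + 1)) v := hmin_v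
    _ ≤ Q * ((((max L 1 : ℝ≥0) : ℝ) ^ p + C₀) * (A * r ^ (n - 1)) + C₀ * (B * r ^ (n - 1))) := by
      gcongr
      exact hE_v.trans (by gcongr)
    _ = _ := by ring

/-- The area-term bound: for a Lipschitz `Q`-minimizer `u` and
`θ ∈ (-1,-1/2]`, with `S(τ) = min{(τ+1)^p, 1}`, there is `C > 0`, depending only on
`n, Q, p, θ, C₀` and the Lipschitz constant of `u`, such that
`∫_{B⁺_r(x₀) ∩ {u ≤ θ}} S(u) dx ≤ C r^{n-1}` for all `x₀ ∈ closure ℝⁿ₊` and `r ≥ 1`. -/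
theorem statement15 (n : ℕ) (hn : 2 ≤ n) (p : ℝ) (hp : 1 < p) (Q : ℝ) (hQ : 1 ≤ Q)
    (C₀ : ℝ) (hC₀ : 1 ≤ C₀) (L : NNReal) (θ : ℝ) (hθ : θ ∈ Ioc (-1 : ℝ) (-1/2)) :
    ∃ C : ℝ, 0 < C ∧
      ∀ F G : ℝ → ℝ, Continuous F → Continuous G →
        (∀ τ, 0 ≤ F τ) → (∀ τ, 0 ≤ G τ) → PotentialBounds p C₀ F G →
        ∀ u : EuclideanSpace ℝ (Fin n) → ℝ, LipschitzWith L u →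
          (∀ x, u x ∈ Icc (-1 : ℝ) 1) →
          IsQMinimizer n (by omega) p Q F G u →
          ∀ x₀ ∈ closure (upperHalfSpace n (by omega)), ∀ r : ℝ, 1 ≤ r →
            (∫ x in ball x₀ r ∩ upperHalfSpace n (by omega) ∩ {x | u x ≤ θ},
                min ((u x + 1) ^ p) 1)
              ≤ C * r ^ (n - 1) := by
  have hn' : 0 < n := by omega
  obtain ⟨C, hC⟩ := exists_energyE_ball_le_of_isQMinimizer hn' (by linarith : 0 < p)
    (by linarith : 0 ≤ Q) (by linarith : 0 ≤ C₀) L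
  refine ⟨max (C₀ * C) 1, by positivity, ?_⟩
  intro F G hFc _ hF0 hG0 hPB u hu hu1 hmin x₀ _ r hr
  have hΩ : volume (ball x₀ (r + 1)) ≠ ∞ := measure_ball_lt_top.ne
  calc (∫ x in ball x₀ r ∩ upperHalfSpace n hn' ∩ {x | u x ≤ θ}, min ((u x + 1) ^ p) 1)
      ≤ C₀ * ∫ x in ball x₀ (r + 1) ∩ upperHalfSpace n hn', F (u x) :=
        setIntegral_sublevel_le_mul_setIntegral hPB (by linarith) (by linarith)
          (hθ.2.trans (by norm_num)) hFc hF0 hu.continuous.measurable hu1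
          (measurableSet_ball.inter (measurableSet_upperHalfSpace hn'))
          (inter_subset_inter_left _ (ball_subset_ball (by linarith)))
          (measure_ne_top_of_subset inter_subset_left hΩ)
    _ ≤ C₀ * energyE n hn' p F G (ball x₀ (r + 1)) u := by
        gcongr
        exact setIntegral_comp_le_energyE hn' hu hu1 hFc hF0
          (fun τ hτ => (le_max_left _ _).trans (hPB.max_le (by linarith) (by linarith) hτ)) hG0
          (by linarith) measurableSet_ball hΩ
    _ ≤ C₀ * (C * r ^ (n - 1)) := by gcongr; exact hC F G hF0 hG0 hPB u hu hu1 hmin x₀ r hr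
    _ ≤ max (C₀ * C) 1 * r ^ (n - 1) := by
        rw [← mul_assoc]
        gcongr
        exact le_max_left _ _
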